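/- Every strongly regular frame admits a compactification: if L is a frame such that every a ∈ L satisfies a = sSup {b | b ≺₀ a}, where ≺₀ is the greatest interpolative relation contained in the well-inside relation ≺ of L, then there exist a compact regular frame M and a dense surjective frame homomorphism k : M → L. -/

import Mathlib

/-- The well-inside relation of a frame: `b` is well inside `a` iff `bᶜ ⊔ a = ⊤`. -/
def WellInside {L : Type*} [Order.Frame L] (b a : L) : Prop := bᶜ ⊔ a = ⊤

/-- A frame is regular if every element is the join of the elements well inside it. -/
def IsRegularFrame (L : Type*) [Order.Frame L] : Prop :=
  ∀ a : L, a = sSup {b | WellInside b a}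

/-- A frame is compact if `⊤` is a compact element. -/
def IsCompactFrame (L : Type*) [Order.Frame L] : Prop :=
  ∀ S : Set L, ⊤ ≤ sSup S → ∃ T : Set L, T ⊆ S ∧ T.Finite ∧ ⊤ ≤ sSup T

/-- A binary relation `r` is interpolative if `r x y` implies there is `z`
with `r x z` and `r z y`. -/
def Interpolative {A : Type*} (r : A → A → Prop) : Prop :=
  ∀ x y, r x y → ∃ z, r x z ∧ r z y

/-- The greatest interpolative relation contained in `r`: the union of all
interpolative relations contained in `r`. -/
def gis {A : Type*} (r : A → A → Prop) : A → A → Prop :=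
  fun x y => ∃ s : A → A → Prop,
    (∀ a b, s a b → r a b) ∧ Interpolative s ∧ s x y

/-!
The compactification is the frame `M` of round ideals of `L` for `≺₀` (ideals in which every
`x` is `≺₀`-below another member), with `k J = sSup J`. A join of round ideals consists of the
elements below finite joins of their members, so `⊤ ∈ ⨆ S` is witnessed by finitely many ideals of
`S`: `M` is compact. For `x ∈ J` interpolation gives `x ≺₀ c ≺₀ p ≺₀ b ∈ J`; the ideal `↓c` of
elements `≺₀ c` is well inside `J`, as `↓cᶜ` is disjoint from `↓c` while `↓cᶜ ⊔ J` contains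
`pᶜ ⊔ b = ⊤`. So `M` is regular. Strong regularity of `L` says exactly that `k (↓a) = a`, and `k` is
dense because an ideal with join `⊥` is `{⊥}`.
-/

section GreatestInterpolative

variable {A : Type*} {r : A → A → Prop}

theorem gis_le {x y : A} (h : gis r x y) : r x y :=
  let ⟨_, hsr, _, hxy⟩ := h
  hsr _ _ hxy

theorem interpolative_gis : Interpolative (gis r) := by
  rintro x y ⟨s, hsr, hs, hxy⟩
  obtain ⟨z, hxz, hzy⟩ := hs x y hxy
  exact ⟨z, ⟨s, hsr, hs, hxz⟩, ⟨s, hsr, hs, hzy⟩⟩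

theorem gis_of_forall_left {a : A} (h : ∀ y, r a y) (y : A) : gis r a y :=
  ⟨fun x _ => x = a, by rintro _ y rfl; exact h y, by rintro _ _ rfl; exact ⟨_, rfl, rfl⟩, rfl⟩

theorem gis_of_forall_right {a : A} (h : ∀ x, r x a) (x : A) : gis r x a :=
  ⟨fun _ y => y = a, by rintro x _ rfl; exact h x, by rintro _ _ rfl; exact ⟨_, rfl, rfl⟩, rfl⟩

theorem gis_mono [Preorder A] (hr : ∀ {x' x y y'}, x' ≤ x → r x y → y ≤ y' → r x' y')
    {x' x y y' : A} (hx : x' ≤ x) (h : gis r x y) (hy : y ≤ y') : gis r x' y' := by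
  refine ⟨fun p q => ∃ u v, p ≤ u ∧ gis r u v ∧ v ≤ q, ?_, ?_, x, y, hx, h, hy⟩
  · rintro p q ⟨u, v, hpu, huv, hvq⟩
    exact hr hpu (gis_le huv) hvq
  · rintro p q ⟨u, v, hpu, huv, hvq⟩
    obtain ⟨w, huw, hwv⟩ := interpolative_gis u v huv
    exact ⟨w, ⟨u, w, hpu, huw, le_rfl⟩, ⟨w, v, le_rfl, hwv, hvq⟩⟩

theorem gis_map₂ (f : A → A → A) (hf : ∀ {x y x' y'}, r x y → r x' y' → r (f x x') (f y y'))
    {x y x' y' : A} (h : gis r x y) (h' : gis r x' y') : gis r (f x x') (f y y') := by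
  refine ⟨fun p q => ∃ x y x' y', gis r x y ∧ gis r x' y' ∧ p = f x x' ∧ q = f y y', ?_, ?_,
    x, y, x', y', h, h', rfl, rfl⟩
  · rintro _ _ ⟨x, y, x', y', hxy, hxy', rfl, rfl⟩
    exact hf (gis_le hxy) (gis_le hxy')
  · rintro _ _ ⟨x, y, x', y', hxy, hxy', rfl, rfl⟩
    obtain ⟨z, hxz, hzy⟩ := interpolative_gis x y hxy
    obtain ⟨z', hxz', hzy'⟩ := interpolative_gis x' y' hxy'
    exact ⟨f z z', ⟨x, z, x', z', hxz, hxz', rfl, rfl⟩, ⟨z, y, z', y', hzy, hzy', rfl, rfl⟩⟩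

theorem gis_map_swap (f : A → A) (hf : ∀ {x y}, r x y → r (f y) (f x)) {x y : A}
    (h : gis r x y) : gis r (f y) (f x) := by
  refine ⟨fun p q => ∃ x y, gis r x y ∧ p = f y ∧ q = f x, ?_, ?_, x, y, h, rfl, rfl⟩
  · rintro _ _ ⟨x, y, hxy, rfl, rfl⟩
    exact hf (gis_le hxy)
  · rintro _ _ ⟨x, y, hxy, rfl, rfl⟩
    obtain ⟨z, hxz, hzy⟩ := interpolative_gis x y hxy
    exact ⟨f z, ⟨z, y, hzy, rfl, rfl⟩, ⟨x, z, hxz, rfl, rfl⟩⟩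

end GreatestInterpolative

section WellInside

variable {L : Type*} [Order.Frame L] {a a' b b' : L}

theorem wellInside_iff_codisjoint : WellInside b a ↔ Codisjoint bᶜ a :=
  codisjoint_iff.symm

theorem WellInside.le (h : WellInside b a) : b ≤ a :=
  disjoint_compl_right.le_of_codisjoint (wellInside_iff_codisjoint.1 h)

theorem WellInside.mono (hb : b' ≤ b) (h : WellInside b a) (ha : a ≤ a') : WellInside b' a' :=
  wellInside_iff_codisjoint.2 <|
    (wellInside_iff_codisjoint.1 h).mono (compl_anti hb) ha

theorem WellInside.sup (h : WellInside b a) (h' : WellInside b' a') :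
    WellInside (b ⊔ b') (a ⊔ a') := by
  rw [wellInside_iff_codisjoint, compl_sup] at *
  exact (h.mono_right le_sup_left).inf_left (h'.mono_right le_sup_right)

theorem WellInside.inf (h : WellInside b a) (h' : WellInside b' a') :
    WellInside (b ⊓ b') (a ⊓ a') := by
  rw [wellInside_iff_codisjoint] at *
  exact (h.mono_left (compl_anti inf_le_left)).inf_right (h'.mono_left (compl_anti inf_le_right))

theorem WellInside.compl (h : WellInside b a) : WellInside aᶜ bᶜ :=
  wellInside_iff_codisjoint.2 <| (wellInside_iff_codisjoint.1 h).symm.mono_left le_compl_compl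

theorem wellInside_bot_left (a : L) : WellInside ⊥ a := by
  rw [WellInside, compl_bot, top_sup_eq]

theorem wellInside_top_right (b : L) : WellInside b ⊤ :=
  sup_top_eq _

theorem wellInside_of_disjoint_of_codisjoint {c : L} (hcb : Disjoint c b) (hca : Codisjoint c a) :
    WellInside b a :=
  wellInside_iff_codisjoint.2 <| hca.mono_left (le_compl_iff_disjoint_left.2 hcb.symm)

end WellInside

local infix:50 " ≺₀ " => gis WellInside

section StronglyWellInside

variable {L : Type*} [Order.Frame L] {a a' b b' : L}

theorem le_of_gis_wellInside (h : b ≺₀ a) : b ≤ a :=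
  (gis_le h).le

theorem gis_wellInside_mono (hb : b' ≤ b) (h : b ≺₀ a) (ha : a ≤ a') : b' ≺₀ a' :=
  gis_mono WellInside.mono hb h ha

theorem gis_wellInside_bot_left (a : L) : ⊥ ≺₀ a :=
  gis_of_forall_left wellInside_bot_left a

theorem gis_wellInside_top_right (b : L) : b ≺₀ ⊤ :=
  gis_of_forall_right wellInside_top_right b

theorem gis_wellInside_sup (h : b ≺₀ a) (h' : b' ≺₀ a') : b ⊔ b' ≺₀ a ⊔ a' :=
  gis_map₂ (· ⊔ ·) WellInside.sup h h'

theorem gis_wellInside_inf (h : b ≺₀ a) (h' : b' ≺₀ a') : b ⊓ b' ≺₀ a ⊓ a' :=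
  gis_map₂ (· ⊓ ·) WellInside.inf h h'

theorem gis_wellInside_compl (h : b ≺₀ a) : aᶜ ≺₀ bᶜ :=
  gis_map_swap (·ᶜ) WellInside.compl h

end StronglyWellInside

structure RoundIdeal (L : Type*) [Order.Frame L] where
  carrier : Set L
  bot_mem' : ⊥ ∈ carrier
  sup_mem' : ∀ {x y}, x ∈ carrier → y ∈ carrier → x ⊔ y ∈ carrier
  mem_of_le' : ∀ {x y}, x ≤ y → y ∈ carrier → x ∈ carrier
  exists_gis' : ∀ {x}, x ∈ carrier → ∃ y ∈ carrier, x ≺₀ y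

namespace RoundIdeal

variable {L : Type*} [Order.Frame L]

instance : SetLike (RoundIdeal L) L where
  coe := carrier
  coe_injective := by rintro ⟨⟩ ⟨⟩ h; congr

instance : PartialOrder (RoundIdeal L) := .ofSetLike (RoundIdeal L) L

variable (J K : RoundIdeal L) {x y : L}

theorem bot_mem : ⊥ ∈ J := J.bot_mem'

theorem sup_mem (hx : x ∈ J) (hy : y ∈ J) : x ⊔ y ∈ J := J.sup_mem' hx hy

theorem mem_of_le (hxy : x ≤ y) (hy : y ∈ J) : x ∈ J := J.mem_of_le' hxy hy

theorem exists_gis (hx : x ∈ J) : ∃ y ∈ J, x ≺₀ y := J.exists_gis' hx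

theorem finset_sup_mem {ι : Type*} (s : Finset ι) (f : ι → L) (h : ∀ i ∈ s, f i ∈ J) :
    s.sup f ∈ J :=
  Finset.sup_induction J.bot_mem (fun _ h₁ _ h₂ => J.sup_mem h₁ h₂) h

def below (a : L) : RoundIdeal L where
  carrier := {x | x ≺₀ a}
  bot_mem' := gis_wellInside_bot_left a
  sup_mem' hx hy := sup_idem a ▸ gis_wellInside_sup hx hy
  mem_of_le' hxy hy := gis_wellInside_mono hxy hy le_rfl
  exists_gis' hx :=
    let ⟨z, hxz, hza⟩ := interpolative_gis _ _ hx
    ⟨z, hza, hxz⟩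

def inter : RoundIdeal L where
  carrier := J ∩ K
  bot_mem' := ⟨J.bot_mem, K.bot_mem⟩
  sup_mem' hx hy := ⟨J.sup_mem hx.1 hy.1, K.sup_mem hx.2 hy.2⟩
  mem_of_le' hxy hy := ⟨J.mem_of_le hxy hy.1, K.mem_of_le hxy hy.2⟩
  exists_gis' := by
    rintro x ⟨hxJ, hxK⟩
    obtain ⟨y, hyJ, hxy⟩ := J.exists_gis hxJ
    obtain ⟨z, hzK, hxz⟩ := K.exists_gis hxK
    exact ⟨y ⊓ z, ⟨J.mem_of_le inf_le_left hyJ, K.mem_of_le inf_le_right hzK⟩,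
      inf_idem x ▸ gis_wellInside_inf hxy hxz⟩

def joinCarrier (S : Set (RoundIdeal L)) : Set L :=
  {x | ∃ s : Finset L, (∀ b ∈ s, ∃ J ∈ S, b ∈ J) ∧ x ≤ s.sup id}

theorem bot_mem_joinCarrier {S : Set (RoundIdeal L)} : ⊥ ∈ joinCarrier S :=
  ⟨∅, by simp, bot_le⟩

theorem mem_joinCarrier_of_mem {S : Set (RoundIdeal L)} {J : RoundIdeal L} (hJ : J ∈ S)
    (hx : x ∈ J) : x ∈ joinCarrier S :=
  ⟨{x}, fun b hb => Finset.mem_singleton.1 hb ▸ ⟨J, hJ, hx⟩, by simp⟩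

theorem sup_mem_joinCarrier {S : Set (RoundIdeal L)} (hx : x ∈ joinCarrier S)
    (hy : y ∈ joinCarrier S) : x ⊔ y ∈ joinCarrier S := by
  classical
  obtain ⟨s, hs, hxs⟩ := hx
  obtain ⟨t, ht, hyt⟩ := hy
  refine ⟨s ∪ t, fun b hb => (Finset.mem_union.1 hb).elim (hs b) (ht b), ?_⟩
  rw [Finset.sup_union]
  exact sup_le_sup hxs hyt

theorem exists_gis_of_mem_joinCarrier {S : Set (RoundIdeal L)} (hx : x ∈ joinCarrier S) :
    ∃ y ∈ joinCarrier S, x ≺₀ y := by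
  obtain ⟨s, hs, hxs⟩ := hx
  obtain ⟨y, hy, hsy⟩ : ∃ y ∈ joinCarrier S, s.sup id ≺₀ y := by
    refine Finset.sup_induction (p := fun z => ∃ y ∈ joinCarrier S, z ≺₀ y)
      ⟨⊥, bot_mem_joinCarrier, gis_wellInside_bot_left ⊥⟩ ?_ ?_
    · rintro _ ⟨y₁, hy₁, h₁⟩ _ ⟨y₂, hy₂, h₂⟩
      exact ⟨y₁ ⊔ y₂, sup_mem_joinCarrier hy₁ hy₂, gis_wellInside_sup h₁ h₂⟩
    · intro b hb
      obtain ⟨J, hJ, hbJ⟩ := hs b hb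
      obtain ⟨c, hcJ, hbc⟩ := J.exists_gis hbJ
      exact ⟨c, mem_joinCarrier_of_mem hJ hcJ, hbc⟩
  exact ⟨y, hy, gis_wellInside_mono hxs hsy le_rfl⟩

instance : SupSet (RoundIdeal L) where
  sSup S :=
    { carrier := joinCarrier S
      bot_mem' := bot_mem_joinCarrier
      sup_mem' := sup_mem_joinCarrier
      mem_of_le' := fun hxy ⟨s, hs, hys⟩ => ⟨s, hs, hxy.trans hys⟩
      exists_gis' := exists_gis_of_mem_joinCarrier }

theorem mem_sSup {S : Set (RoundIdeal L)} :
    x ∈ sSup S ↔ ∃ s : Finset L, (∀ b ∈ s, ∃ J ∈ S, b ∈ J) ∧ x ≤ s.sup id :=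
  Iff.rfl

instance : CompleteLattice (RoundIdeal L) :=
  completeLatticeOfSup _ fun _ =>
    ⟨fun _ hJ _ => mem_joinCarrier_of_mem hJ,
     fun K hK _ hx => let ⟨s, hs, hxs⟩ := mem_sSup.1 hx
       K.mem_of_le hxs <| K.finset_sup_mem s id fun b hb =>
       let ⟨_, hJ, hbJ⟩ := hs b hb
       hK hJ hbJ⟩

variable {J K}

theorem mem_inf : x ∈ J ⊓ K ↔ x ∈ J ∧ x ∈ K :=
  ⟨fun hx => ⟨inf_le_left (a := J) hx, inf_le_right (a := J) hx⟩,
   fun hx => le_inf (show inter J K ≤ J from fun _ hy => hy.1)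
     (show inter J K ≤ K from fun _ hy => hy.2) hx⟩

theorem mem_bot : x ∈ (⊥ : RoundIdeal L) ↔ x = ⊥ :=
  ⟨fun hx => le_bot_iff.1 (le_of_gis_wellInside (bot_le (a := below ⊥) hx)),
   fun hx => hx ▸ bot_mem ⊥⟩

theorem mem_top (x : L) : x ∈ (⊤ : RoundIdeal L) :=
  le_top (a := below ⊤) (gis_wellInside_top_right x)

theorem eq_top_of_top_mem (h : ⊤ ∈ J) : J = ⊤ :=
  top_unique fun _ _ => J.mem_of_le le_top h

instance : Order.Frame (RoundIdeal L) :=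
  .ofMinimalAxioms
    { inf_sSup_le_iSup_inf := fun J S x hx => by
        obtain ⟨hxJ, s, hs, hxs⟩ := mem_inf.1 hx
        rw [← sSup_image, ← inf_eq_left.2 hxs, Finset.sup_inf_distrib_left]
        refine finset_sup_mem _ s _ fun b hb => ?_
        obtain ⟨K, hK, hbK⟩ := hs b hb
        exact le_sSup (Set.mem_image_of_mem (J ⊓ ·) hK)
          (mem_inf.2 ⟨J.mem_of_le inf_le_left hxJ, K.mem_of_le inf_le_right hbK⟩) }

theorem isCompactFrame : IsCompactFrame (RoundIdeal L) := by
  intro S hS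
  obtain ⟨s, hs, htop⟩ := mem_sSup.1 (hS (mem_top ⊤))
  choose K hKS hbK using hs
  refine ⟨Set.range fun b : s => K b b.2, by rintro _ ⟨b, rfl⟩; exact hKS _ _,
    Set.finite_range _, (eq_top_of_top_mem ?_).ge⟩
  exact mem_of_le _ htop <| finset_sup_mem _ s id fun b hb =>
    le_sSup (Set.mem_range_self (f := fun b : s => K b b.2) ⟨b, hb⟩) (hbK b hb)

theorem below_wellInside {b c : L} (hcb : c ≺₀ b) (hbJ : b ∈ J) : WellInside (below c) J := by
  obtain ⟨p, hcp, hpb⟩ := interpolative_gis _ _ hcb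
  refine wellInside_of_disjoint_of_codisjoint (c := below cᶜ) ?_ ?_
  · refine disjoint_iff.2 (eq_bot_iff.2 fun y hy => mem_bot.2 (le_bot_iff.1 ?_))
    obtain ⟨hyc', hyc⟩ := mem_inf.1 hy
    exact compl_inf_self c ▸ le_inf (le_of_gis_wellInside hyc') (le_of_gis_wellInside hyc)
  · have hpb' : pᶜ ⊔ b = ⊤ := (gis_le hpb : WellInside p b)
    refine codisjoint_iff.2 (eq_top_of_top_mem (hpb' ▸ sup_mem _ ?_ ?_))
    · exact le_sup_left (a := below cᶜ) (gis_wellInside_compl hcp)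
    · exact le_sup_right (a := below cᶜ) hbJ

theorem isRegularFrame : IsRegularFrame (RoundIdeal L) := by
  refine fun J => le_antisymm (fun x hx => ?_) (sSup_le fun K hK => WellInside.le hK)
  obtain ⟨b, hbJ, hxb⟩ := J.exists_gis hx
  obtain ⟨c, hxc, hcb⟩ := interpolative_gis _ _ hxb
  exact le_sSup (s := {K | WellInside K J}) (below_wellInside hcb hbJ) hxc

def sSupHom : FrameHom (RoundIdeal L) L where
  toFun J := sSup (J : Set L)
  map_inf' J K := by
    refine le_antisymm (sSup_le fun x hx => ?_) ?_
    · obtain ⟨hxJ, hxK⟩ := mem_inf.1 hx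
      exact le_inf (le_sSup hxJ) (le_sSup hxK)
    · rw [sSup_inf_sSup]
      exact iSup₂_le fun p hp =>
        le_sSup (mem_inf.2 ⟨J.mem_of_le inf_le_left hp.1, K.mem_of_le inf_le_right hp.2⟩)
  map_top' := top_unique (le_sSup (mem_top ⊤))
  map_sSup' S := by
    rw [sSup_image]
    refine le_antisymm (sSup_le fun _ ⟨s, hs, hxs⟩ => hxs.trans (Finset.sup_le fun b hb => ?_))
      (iSup₂_le fun J hJ => sSup_le_sSup fun _ hx => le_sSup hJ hx)
    obtain ⟨J, hJ, hbJ⟩ := hs b hb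
    exact (le_sSup hbJ).trans (le_iSup₂_of_le J hJ le_rfl)

theorem eq_bot_of_sSupHom_eq_bot (hJ : sSupHom J = ⊥) : J = ⊥ :=
  eq_bot_iff.2 fun _ hx => mem_bot.2 (le_bot_iff.1 (hJ ▸ le_sSup hx))

theorem sSupHom_below (a : L) : sSupHom (below a) = sSup {b | b ≺₀ a} := rfl

end RoundIdeal

/-- Every strongly regular frame admits a compact regular compactification:
a dense surjective frame homomorphism from a compact regular frame. -/
theorem stronglyRegular_has_compactification
    {L : Type u} [Order.Frame L]
    (h : ∀ a : L, a = sSup {b | gis WellInside b a}) :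
    ∃ (M : Type u) (_ : Order.Frame M), IsCompactFrame M ∧ IsRegularFrame M ∧
      ∃ k : FrameHom M L, (∀ a : M, k a = ⊥ → a = ⊥) ∧ Function.Surjective k :=
  ⟨RoundIdeal L, inferInstance, RoundIdeal.isCompactFrame, RoundIdeal.isRegularFrame,
    RoundIdeal.sSupHom, fun _ => RoundIdeal.eq_bot_of_sSupHom_eq_bot,
    fun a => ⟨RoundIdeal.below a, (RoundIdeal.sSupHom_below a).trans (h a).symm⟩⟩
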